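/- Let D be a real m×n matrix with singular values σ₁ ≥ σ₂ ≥ … ≥ σ_q ≥ 0 (q = min(m,n)), and let λ > 0. Then for every real m×n matrix D₀ with rank(D₀) = r ≥ 1 and every real n×n matrix C satisfying D₀ = D₀ C, the objective value of the PCE problem is bounded below as (1/2)‖C‖_F² + (λ/2)‖D − D₀‖_F² ≥ (1/2) r + (λ/2) Σᵢ₌ᵣ₊₁^q σᵢ². -/

import Mathlib

/-!
Right multiplication by a matrix `W` with orthonormal columns (`Wᵀ * W = 1`) does not increase
the Frobenius norm. The row space of `D₀` is `r`-dimensional and fixed by `Cᵀ`, so compressing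
`Cᵀ` onto an orthonormal basis `W₁` of it gives `‖C‖² ≥ ‖W₁‖² = r`. For an orthonormal basis
`W₂` of `ker D₀`, of dimension `n - r`, we get `‖D - D₀‖² ≥ ‖D W₂‖² = ∑ σᵢ² pᵢ`, where the
`pᵢ ∈ [0, 1]` are the diagonal entries of the projection `G Gᵀ`, `G = Vᵀ W₂`, and sum to `n - r`.
Since the `σᵢ²` decrease, such a weighted sum is at least the sum of the last `n - r` of them.
-/

open Matrix

/-- The Frobenius norm of a real matrix: ‖M‖_F = sqrt(trace(M Mᵀ)). -/
noncomputable def frobeniusNorm {m n : ℕ} (M : Matrix (Fin m) (Fin n) ℝ) : ℝ :=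
  Real.sqrt (Matrix.trace (M * Mᵀ))

open Finset

theorem Submodule.exists_orthonormal_columns_mem {ι : Type*} [Fintype ι]
    (S : Submodule ℝ (ι → ℝ)) {k : ℕ} (hk : Module.finrank ℝ S = k) :
    ∃ W : Matrix ι (Fin k) ℝ, Wᵀ * W = 1 ∧ ∀ j, Wᵀ j ∈ S := by
  subst hk
  let e := (WithLp.linearEquiv 2 ℝ (ι → ℝ)).symm
  let b := (stdOrthonormalBasis ℝ (S.map e.toLinearMap)).reindex
    (finCongr (LinearEquiv.finrank_map_eq e S))
  let v : Fin (Module.finrank ℝ S) → EuclideanSpace ℝ ι := fun j => b j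
  refine ⟨of fun i j => v j i, ?_, fun j => ?_⟩
  · have hv : Orthonormal ℝ v := b.orthonormal.comp_linearIsometry (Submodule.subtypeₗᵢ _)
    rw [← gram_eq_one_iff_orthonormal,
      gram_eq_conjTranspose_mul (EuclideanSpace.basisFun ι ℝ)] at hv
    simpa [conjTranspose_eq_transpose_of_trivial] using hv
  · obtain ⟨x, hx, hxv⟩ := Submodule.mem_map.mp (b j).2
    convert hx
    ext i
    simp [v, e, ← hxv]

namespace Matrix

variable {ι κ ν : Type*} [Fintype κ] [Fintype ν]

lemma posSemidef_mul_transpose_self [Fintype ι] (M : Matrix ι κ ℝ) : (M * Mᵀ).PosSemidef := by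
  simpa [conjTranspose_eq_transpose_of_trivial] using posSemidef_self_mul_conjTranspose M

lemma trace_mul_transpose_nonneg [Fintype ι] (M : Matrix ι κ ℝ) : 0 ≤ trace (M * Mᵀ) :=
  (posSemidef_mul_transpose_self M).trace_nonneg

lemma trace_mul_mul_transpose_of_transpose_mul_self_eq_one [Fintype ι] [DecidableEq ι]
    {Q : Matrix κ ι ℝ} (hQ : Qᵀ * Q = 1) (A : Matrix ι ν ℝ) :
    trace ((Q * A) * (Q * A)ᵀ) = trace (A * Aᵀ) := by
  rw [transpose_mul, trace_mul_comm, Matrix.mul_assoc, ← Matrix.mul_assoc Qᵀ, hQ, Matrix.one_mul,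
    trace_mul_comm]

lemma trace_mul_mul_transpose_le [Fintype ι] [DecidableEq κ] [DecidableEq ν] (M : Matrix ι κ ℝ)
    {W : Matrix κ ν ℝ} (hW : Wᵀ * W = 1) : trace ((M * W) * (M * W)ᵀ) ≤ trace (M * Mᵀ) := by
  set P := W * Wᵀ
  have hPP : P * P = P := by
    rw [Matrix.mul_assoc, ← Matrix.mul_assoc Wᵀ, hW, Matrix.one_mul]
  have hPt : Pᵀ = P := by rw [transpose_mul, transpose_transpose]
  have hcompl : (1 - P) * (1 - P)ᵀ = 1 - P := by
    rw [transpose_sub, transpose_one, hPt, Matrix.sub_mul, Matrix.mul_sub, Matrix.mul_sub, hPP]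
    simp
  have hsplit : (M * (1 - P)) * (M * (1 - P))ᵀ = M * Mᵀ - (M * W) * (M * W)ᵀ := by
    rw [transpose_mul, Matrix.mul_assoc, ← Matrix.mul_assoc (1 - P), hcompl, Matrix.sub_mul,
      Matrix.mul_sub]
    simp only [Matrix.one_mul, transpose_mul, P, Matrix.mul_assoc]
  have := trace_mul_transpose_nonneg (M * (1 - P))
  rw [hsplit, trace_sub] at this
  linarith

lemma trace_mul_mul_transpose_of_isDiag [Fintype ι] [DecidableEq κ] {A : Matrix ι κ ℝ}
    (hA : (Aᵀ * A).IsDiag) (G : Matrix κ ν ℝ) :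
    trace ((A * G) * (A * G)ᵀ) = ∑ i, (Aᵀ * A) i i * (G * Gᵀ) i i := by
  have hcycle : trace ((A * G) * (A * G)ᵀ) = trace ((Aᵀ * A) * (G * Gᵀ)) := by
    rw [transpose_mul, ← Matrix.mul_assoc, trace_mul_comm]
    simp only [Matrix.mul_assoc]
  rw [hcycle, ← hA.diagonal_diag]
  simp [trace, diagonal_mul]

lemma mul_transpose_self_apply_self_le_one [DecidableEq ν] {G : Matrix κ ν ℝ}
    (hG : Gᵀ * G = 1) (i : κ) : (G * Gᵀ) i i ≤ 1 := by
  set P := G * Gᵀ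
  have hPP : P * P = P := by
    rw [Matrix.mul_assoc, ← Matrix.mul_assoc Gᵀ, hG, Matrix.one_mul]
  have hsq : P i i ^ 2 ≤ P i i := calc
    P i i ^ 2 ≤ ∑ k, P i k ^ 2 := single_le_sum (fun k _ => sq_nonneg (P i k)) (mem_univ i)
    _ = (P * P) i i := by
      have hsymm : ∀ a b, P a b = P b a := fun a b => by
        simp only [P, mul_apply, transpose_apply, mul_comm]
      simp only [mul_apply, sq, hsymm _ i]
    _ = P i i := by rw [hPP]
  nlinarith [(posSemidef_mul_transpose_self G).diag_nonneg (i := i)]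

lemma sum_mul_transpose_self_apply_self [DecidableEq ν] {G : Matrix κ ν ℝ} (hG : Gᵀ * G = 1) :
    ∑ i, (G * Gᵀ) i i = Fintype.card ν := by
  change trace (G * Gᵀ) = _
  rw [trace_mul_comm, hG, trace_one]

theorem rank_le_trace_mul_transpose_of_eq_mul [Fintype ι] [DecidableEq κ] {A : Matrix ι κ ℝ}
    {C : Matrix κ κ ℝ} (h : A = A * C) : (A.rank : ℝ) ≤ trace (C * Cᵀ) := by
  obtain ⟨W, hW, hWmem⟩ :=
    (LinearMap.range Aᵀ.mulVecLin).exists_orthonormal_columns_mem (rank_transpose A)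
  have hCW : Cᵀ * W = W := by
    ext i j
    obtain ⟨y, hy⟩ := hWmem j
    have hfix : Cᵀ *ᵥ Wᵀ j = Wᵀ j := by
      rw [← hy, mulVecLin_apply, mulVec_mulVec, ← transpose_mul, ← h]
    exact congrFun hfix i
  have := trace_mul_mul_transpose_le Cᵀ hW
  rwa [hCW, trace_mul_comm, hW, trace_one, Fintype.card_fin, transpose_transpose,
    trace_mul_comm] at this

theorem exists_orthonormal_columns_mul_eq_zero (A : Matrix ι κ ℝ) :
    ∃ W : Matrix κ (Fin (Fintype.card κ - A.rank)) ℝ, Wᵀ * W = 1 ∧ A * W = 0 := by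
  have hker : Module.finrank ℝ (LinearMap.ker A.mulVecLin) = Fintype.card κ - A.rank := by
    have := LinearMap.finrank_range_add_finrank_ker A.mulVecLin
    rw [Module.finrank_fintype_fun_eq_card] at this
    rw [rank]
    omega
  obtain ⟨W, hW, hWmem⟩ := (LinearMap.ker A.mulVecLin).exists_orthonormal_columns_mem hker
  exact ⟨W, hW, ext fun i j => congrFun (hWmem j) i⟩

end Matrix

lemma frobeniusNorm_sq {m n : ℕ} (M : Matrix (Fin m) (Fin n) ℝ) :
    frobeniusNorm M ^ 2 = trace (M * Mᵀ) :=
  Real.sq_sqrt (trace_mul_transpose_nonneg M)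

/-- The terms `(f i - t) * (𝟙_B i - p i)` are all nonpositive and, as `∑ p = #B`, they add up to
`∑_B f - ∑ f p`. -/
theorem Finset.sum_le_sum_mul_of_le_threshold_le {ι : Type*} [Fintype ι] [DecidableEq ι]
    (B : Finset ι) {f p : ι → ℝ} (t : ℝ)
    (hB : ∀ i ∈ B, f i ≤ t) (hBc : ∀ i ∉ B, t ≤ f i) (hp0 : ∀ i, 0 ≤ p i) (hp1 : ∀ i, p i ≤ 1)
    (hsum : ∑ i, p i = #B) : ∑ i ∈ B, f i ≤ ∑ i, f i * p i := by
  have hterm : ∀ i, (f i - t) * ((if i ∈ B then 1 else 0) - p i) ≤ 0 := by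
    intro i
    by_cases hi : i ∈ B
    · simpa [hi] using
        mul_nonpos_of_nonpos_of_nonneg (sub_nonpos.2 (hB i hi)) (sub_nonneg.2 (hp1 i))
    · simpa [hi] using mul_nonneg (sub_nonneg.2 (hBc i hi)) (hp0 i)
  have hexp : ∑ i, (f i - t) * ((if i ∈ B then 1 else 0) - p i)
      = ∑ i ∈ B, f i - ∑ i, f i * p i - t * (#B - ∑ i, p i) := by
    simp only [sub_mul, mul_sub, mul_ite, mul_one, mul_zero, sum_sub_distrib, sum_ite_mem,
      univ_inter, ← mul_sum, sum_const, nsmul_eq_mul]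
    ring
  have := sum_nonpos (s := univ) fun i _ => hterm i
  rw [hexp, hsum, sub_self, mul_zero, sub_zero] at this
  linarith

lemma Fin.card_filter_le_val (n r : ℕ) : #{i : Fin n | r ≤ (i : ℕ)} = n - r := by
  have hlt := Fin.card_filter_val_lt (n := n) (m := r)
  have h := card_filter_add_card_filter_not (s := univ) (fun i : Fin n => (i : ℕ) < r)
  simp only [not_lt, card_univ, Fintype.card_fin] at h
  omega

theorem Fin.sum_filter_le_le_sum_mul_of_antitone {n r : ℕ} (hr : r ≤ n) {f p : Fin n → ℝ}
    (hf : Antitone f) (hf0 : ∀ i, 0 ≤ f i) (hp0 : ∀ i, 0 ≤ p i) (hp1 : ∀ i, p i ≤ 1)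
    (hsum : ∑ i, p i = n - r) :
    ∑ i ∈ univ.filter (fun i : Fin n => r ≤ (i : ℕ)), f i ≤ ∑ i, f i * p i := by
  refine sum_le_sum_mul_of_le_threshold_le _ (if h : r < n then f ⟨r, h⟩ else 0) ?_ ?_ hp0 hp1 ?_
  · intro i hi
    rw [mem_filter] at hi
    rw [dif_pos (hi.2.trans_lt i.isLt)]
    exact hf (Fin.le_def.2 hi.2)
  · intro i hi
    simp only [mem_filter, mem_univ, true_and, not_le] at hi
    split_ifs
    · exact hf (Fin.le_def.2 hi.le)
    · exact hf0 i
  · rw [hsum, Fin.card_filter_le_val, Nat.cast_sub hr]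

def padZero {q : ℕ} (n : ℕ) (s : Fin q → ℝ) : Fin n → ℝ :=
  fun i => if h : (i : ℕ) < q then s ⟨i, h⟩ else 0

lemma padZero_nonneg {q : ℕ} (n : ℕ) {s : Fin q → ℝ} (hs0 : ∀ i, 0 ≤ s i) (i : Fin n) :
    0 ≤ padZero n s i := by
  unfold padZero
  split_ifs
  exacts [hs0 _, le_rfl]

lemma padZero_antitone {q : ℕ} (n : ℕ) {s : Fin q → ℝ} (hs : Antitone s) (hs0 : ∀ i, 0 ≤ s i) :
    Antitone (padZero n s) := by
  intro i j hij
  unfold padZero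
  split_ifs with hj hi hi
  · exact hs (Fin.le_def.2 hij)
  · exact absurd (lt_of_le_of_lt (Fin.le_def.1 hij) hj) hi
  · exact hs0 _
  · exact le_rfl

lemma sum_filter_le_eq_sum_filter_le_padZero {q n : ℕ} (hq : q ≤ n) (s : Fin q → ℝ) (r : ℕ) :
    ∑ i ∈ univ.filter (fun i : Fin q => r ≤ (i : ℕ)), s i =
      ∑ i ∈ univ.filter (fun i : Fin n => r ≤ (i : ℕ)), padZero n s i := by
  calc _ = ∑ i ∈ univ.filter (fun i : Fin q => r ≤ (i : ℕ)), padZero n s (Fin.castLEEmb hq i) :=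
        sum_congr rfl fun i _ => by simp [padZero]
    _ = _ := by
      rw [← sum_map]
      refine sum_subset ?_ fun i hi hnot => ?_
      · intro i
        simp only [mem_map, mem_filter, mem_univ, true_and, Fin.castLEEmb_apply]
        rintro ⟨k, hk, rfl⟩
        exact hk
      · have : ¬ (i : ℕ) < q := fun h =>
          hnot (mem_map.2 ⟨⟨i, h⟩, by simpa using (mem_filter.1 hi).2, rfl⟩)
        simp [padZero, this]

section RectangularDiagonal

variable {m n : ℕ} {Sig : Matrix (Fin m) (Fin n) ℝ}
  (hSig : ∀ (i : Fin m) (j : Fin n), (i : ℕ) ≠ (j : ℕ) → Sig i j = 0)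
include hSig

lemma isDiag_transpose_mul_self_of_rectangular_diagonal : (Sigᵀ * Sig).IsDiag := by
  intro i j hij
  rw [mul_apply]
  refine sum_eq_zero fun k _ => ?_
  by_cases hki : (k : ℕ) = i
  · rw [hSig k j (hki ▸ fun h => hij (Fin.ext h)), mul_zero]
  · rw [transpose_apply, hSig k i hki, zero_mul]

lemma transpose_mul_self_apply_self_of_rectangular_diagonal {σ : Fin (min m n) → ℝ}
    (hσ : ∀ i : Fin (min m n),
      σ i = Sig ⟨i, lt_of_lt_of_le i.isLt (min_le_left m n)⟩
              ⟨i, lt_of_lt_of_le i.isLt (min_le_right m n)⟩) (i : Fin n) :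
    (Sigᵀ * Sig) i i = padZero n (fun k => σ k ^ 2) i := by
  simp only [mul_apply, transpose_apply, padZero, ← sq]
  split_ifs with h
  · rw [Fintype.sum_eq_single ⟨i, lt_of_lt_of_le h (min_le_left m n)⟩, hσ]
    intro k hk
    rw [hSig k i fun h => hk (Fin.ext h), sq, zero_mul]
  · refine sum_eq_zero fun k _ => ?_
    have : (k : ℕ) ≠ i := by
      have := k.isLt
      have := i.isLt
      omega
    rw [hSig k i this, sq, zero_mul]

end RectangularDiagonal

theorem sum_filter_le_sq_le_frobeniusNorm_sub_sq {m n : ℕ}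
    {D : Matrix (Fin m) (Fin n) ℝ} {U : Matrix (Fin m) (Fin m) ℝ}
    {Sig : Matrix (Fin m) (Fin n) ℝ} {V : Matrix (Fin n) (Fin n) ℝ} {σ : Fin (min m n) → ℝ}
    (hSVD : D = U * Sig * Vᵀ) (hU : Uᵀ * U = 1) (hV : Vᵀ * V = 1)
    (hSigdiag : ∀ (i : Fin m) (j : Fin n), (i : ℕ) ≠ (j : ℕ) → Sig i j = 0)
    (hσ : ∀ i : Fin (min m n),
      σ i = Sig ⟨i, lt_of_lt_of_le i.isLt (min_le_left m n)⟩
              ⟨i, lt_of_lt_of_le i.isLt (min_le_right m n)⟩)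
    (hdesc : Antitone σ) (hnonneg : ∀ i, 0 ≤ σ i) (D₀ : Matrix (Fin m) (Fin n) ℝ) :
    ∑ i ∈ univ.filter (fun i : Fin (min m n) => D₀.rank ≤ (i : ℕ)), σ i ^ 2
      ≤ frobeniusNorm (D - D₀) ^ 2 := by
  have hrn : D₀.rank ≤ n := rank_le_width D₀
  obtain ⟨W, hW, hD₀W⟩ := exists_orthonormal_columns_mul_eq_zero D₀
  set G := Vᵀ * W
  have hG : Gᵀ * G = 1 := by
    rw [transpose_mul, transpose_transpose, Matrix.mul_assoc, ← Matrix.mul_assoc V,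
      mul_eq_one_comm.mp hV, Matrix.one_mul, hW]
  have hσ2 : Antitone fun k => σ k ^ 2 := fun i j hij =>
    pow_le_pow_left₀ (hnonneg j) (hdesc hij) 2
  have hσ2_nonneg : ∀ k, 0 ≤ σ k ^ 2 := fun k => sq_nonneg (σ k)
  rw [sum_filter_le_eq_sum_filter_le_padZero (min_le_right m n)]
  calc _ ≤ ∑ i, (Sigᵀ * Sig) i i * (G * Gᵀ) i i := by
        simp only [transpose_mul_self_apply_self_of_rectangular_diagonal hSigdiag hσ]
        refine Fin.sum_filter_le_le_sum_mul_of_antitone hrn (padZero_antitone n hσ2 hσ2_nonneg)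
          (padZero_nonneg n hσ2_nonneg)
          (fun i => (posSemidef_mul_transpose_self G).diag_nonneg)
          (mul_transpose_self_apply_self_le_one hG) ?_
        rw [sum_mul_transpose_self_apply_self hG, Fintype.card_fin, Fintype.card_fin,
          Nat.cast_sub hrn]
    _ = trace ((Sig * G) * (Sig * G)ᵀ) :=
      (trace_mul_mul_transpose_of_isDiag
        (isDiag_transpose_mul_self_of_rectangular_diagonal hSigdiag) G).symm
    _ = trace (((D - D₀) * W) * ((D - D₀) * W)ᵀ) := by
      rw [Matrix.sub_mul, hD₀W, sub_zero, hSVD,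
        show U * Sig * Vᵀ * W = U * (Sig * G) by simp only [G, Matrix.mul_assoc],
        trace_mul_mul_transpose_of_transpose_mul_self_eq_one hU]
    _ ≤ frobeniusNorm (D - D₀) ^ 2 := by
      rw [frobeniusNorm_sq]
      exact trace_mul_mul_transpose_le _ hW

/-- Let D be a real m×n matrix with singular values
σ₁ ≥ … ≥ σ_q ≥ 0 (q = min(m,n), given via a full SVD D = U Σ Vᵀ) and let λ > 0.
Then for every real m×n matrix D₀ of rank r ≥ 1 and every real n×n matrix C
with D₀ = D₀ C, the PCE objective satisfies
(1/2)‖C‖_F² + (λ/2)‖D − D₀‖_F² ≥ (1/2) r + (λ/2) Σ_{i=r+1}^{q} σᵢ². -/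
theorem stmt_10 {m n : ℕ}
    (D : Matrix (Fin m) (Fin n) ℝ)
    (U : Matrix (Fin m) (Fin m) ℝ) (Sig : Matrix (Fin m) (Fin n) ℝ)
    (V : Matrix (Fin n) (Fin n) ℝ)
    (σ : Fin (min m n) → ℝ)
    (hSVD : D = U * Sig * Vᵀ)
    (hU : Uᵀ * U = 1) (hV : Vᵀ * V = 1)
    (hSigdiag : ∀ (i : Fin m) (j : Fin n), (i : ℕ) ≠ (j : ℕ) → Sig i j = 0)
    (hσ : ∀ i : Fin (min m n),
      σ i = Sig ⟨i, lt_of_lt_of_le i.isLt (min_le_left m n)⟩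
              ⟨i, lt_of_lt_of_le i.isLt (min_le_right m n)⟩)
    (hdesc : ∀ i j : Fin (min m n), i ≤ j → σ j ≤ σ i)
    (hnonneg : ∀ i : Fin (min m n), 0 ≤ σ i)
    (lam : ℝ) (hlam : 0 < lam) :
    ∀ (D₀ : Matrix (Fin m) (Fin n) ℝ) (C : Matrix (Fin n) (Fin n) ℝ) (r : ℕ),
      D₀.rank = r → 1 ≤ r → D₀ = D₀ * C →
      (1 / 2) * (frobeniusNorm C) ^ 2 + (lam / 2) * (frobeniusNorm (D - D₀)) ^ 2 ≥
        (1 / 2) * (r : ℝ) +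
          (lam / 2) *
            ∑ i ∈ Finset.univ.filter (fun i : Fin (min m n) => r ≤ (i : ℕ)), (σ i) ^ 2 := by
  rintro D₀ C r rfl - hDC
  have hC : (D₀.rank : ℝ) ≤ frobeniusNorm C ^ 2 := by
    rw [frobeniusNorm_sq]
    exact rank_le_trace_mul_transpose_of_eq_mul hDC
  have hE := sum_filter_le_sq_le_frobeniusNorm_sub_sq hSVD hU hV hSigdiag hσ
    (fun i j hij => hdesc i j hij) hnonneg D₀
  gcongr
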